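/- arXiv:2305.04045 — 2 statements merged into one kernel-verified Lean document; each statement's English description precedes it below -/
import Mathlib

section
/- Let F be a field extension of ℂ, let x_1,…,x_m ∈ F be algebraically independent over ℂ, let B = (b_{ij}) be an m×n integer matrix with n ≤ m and b_{kk} = 0, and let k ∈ {1,…,n}. Define x_k' := (∏_{i : b_{ik}>0} x_i^{b_{ik}} + ∏_{i : b_{ik}<0} x_i^{−b_{ik}})/x_k. Then the m elements x_1,…,x_{k−1}, x_k', x_{k+1},…,x_m are again algebraically independent over ℂ; that is, the mutation of a cluster is again a cluster. -/
open Polynomial in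
/-- If `u` is transcendental over `K` and `s ∈ K` is nonzero, then `s/u` is transcendental. -/
lemma transcendental_algebraMap_div {K F : Type*} [CommRing K] [Field F] [Algebra K F]
    (hinj : Function.Injective (algebraMap K F)) {u : F} (hu : Transcendental K u)
    {s : K} (hs : s ≠ 0) : Transcendental K (algebraMap K F s / u) := by
  have : Nontrivial K := nontrivial_of_ne s 0 hs
  have hu0 : u ≠ 0 := by
    rintro rfl; exact hu isAlgebraic_zero
  rintro ⟨p, hp, hpz⟩
  set c : F := algebraMap K F s / u with hc
  set n := p.natDegree with hn
  set q : Polynomial K := ∑ i ∈ Finset.range (n + 1), C (p.coeff i * s ^ i) * X ^ (n - i) with hq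
  apply hu
  refine ⟨q, ?_, ?_⟩
  · -- q ≠ 0 : its constant coefficient is p.coeff n * s ^ n ≠ 0
    intro h0
    have hc0 : q.coeff 0 = p.coeff n * s ^ n := by
      rw [hq, finset_sum_coeff]
      rw [Finset.sum_eq_single_of_mem n (Finset.self_mem_range_succ n)]
      · rw [coeff_C_mul, Nat.sub_self, pow_zero, coeff_one]; simp
      · intro i hi hne
        have hilt : i < n := lt_of_le_of_ne (Nat.lt_succ_iff.mp (Finset.mem_range.mp hi)) hne
        have : n - i ≠ 0 := Nat.sub_ne_zero_of_lt hilt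
        simp [coeff_C_mul, coeff_X_pow, (Ne.symm this)]
    have hlc : p.coeff n ≠ 0 := mt Polynomial.leadingCoeff_eq_zero.mp hp
    have : p.coeff n * s ^ n ≠ 0 := by
      intro h
      have hmap := congrArg (algebraMap K F) h
      rw [map_mul, map_pow, map_zero] at hmap
      have h1 : algebraMap K F (p.coeff n) ≠ 0 := fun h' => hlc (hinj (by rw [h', map_zero]))
      have h2 : algebraMap K F s ≠ 0 := fun h' => hs (hinj (by rw [h', map_zero]))
      exact (mul_ne_zero h1 (pow_ne_zero _ h2)) hmap
    rw [h0, coeff_zero] at hc0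
    exact this hc0.symm
  · -- aeval u q = 0
    have hp0 : (Polynomial.aeval c) p = 0 := hpz
    have expand : (Polynomial.aeval u) q = u ^ n * (Polynomial.aeval c) p := by
      rw [Polynomial.aeval_eq_sum_range (p := p) c, hq]
      rw [map_sum, Finset.mul_sum]
      refine Finset.sum_congr rfl fun i hi => ?_
      have hin : i ≤ n := Nat.lt_succ_iff.mp (Finset.mem_range.mp hi)
      rw [map_mul, aeval_C, map_pow, aeval_X, map_mul, map_pow, Algebra.smul_def, hc]
      rw [div_pow, pow_sub₀ u hu0 hin]
      field_simp
    rw [expand, hp0, mul_zero]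
/-- The mutation of a cluster is again a cluster: if `x_1,…,x_m` are algebraically independent
over `ℂ` and `x_k' := (∏_{b_{ik}>0} x_i^{b_{ik}} + ∏_{b_{ik}<0} x_i^{−b_{ik}})/x_k`, then
`x_1,…,x_{k−1}, x_k', x_{k+1},…,x_m` are again algebraically independent over `ℂ`. -/
theorem mutation_algebraicIndependent {F : Type*} [Field F] [Algebra ℂ F]
    {m n : ℕ} (hn : 1 ≤ n) (hnm : n ≤ m)
    (x : Fin m → F) (hx : AlgebraicIndependent ℂ x)
    (B : Matrix (Fin m) (Fin n) ℤ) (k : Fin n) (hkk : B (Fin.castLE hnm k) k = 0) :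
    AlgebraicIndependent ℂ
      (Function.update x (Fin.castLE hnm k)
        (((∏ i ∈ Finset.univ.filter (fun i => 0 < B i k), x i ^ (B i k).toNat) +
          (∏ i ∈ Finset.univ.filter (fun i => B i k < 0), x i ^ (-B i k).toNat)) /
          x (Fin.castLE hnm k))) := by
  classical
  set k' : Fin m := Fin.castLE hnm k with hk'
  set P : F := ∏ i ∈ Finset.univ.filter (fun i => 0 < B i k), x i ^ (B i k).toNat with hP
  set Q : F := ∏ i ∈ Finset.univ.filter (fun i => B i k < 0), x i ^ (-B i k).toNat with hQ
  set c : F := (P + Q) / x k' with hcdef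
  -- the family of the other variables
  set z : {i : Fin m // i ≠ k'} → F := fun i => x i.1 with hz
  have hzind : AlgebraicIndependent ℂ z := hx.comp Subtype.val Subtype.val_injective
  set K := Algebra.adjoin ℂ (Set.range z) with hK
  -- x k' is transcendental over K
  have hxe : (fun o : Option {i : Fin m // i ≠ k'} => o.elim (x k') z)
      = x ∘ (Equiv.optionSubtypeNe k') := by
    funext o; cases o <;> rfl
  have htrans : Transcendental K (x k') := by
    rw [hK, ← hzind.option_iff_transcendental (x k')]
    rw [hxe]
    exact hx.comp _ (Equiv.optionSubtypeNe k').injective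
  -- P + Q lies in K and is nonzero
  have hmem : ∀ i : Fin m, B i k ≠ 0 → x i ∈ K := by
    intro i hi
    have hik : i ≠ k' := by rintro rfl; exact hi hkk
    exact Algebra.subset_adjoin ⟨⟨i, hik⟩, rfl⟩
  have hPQmem : P + Q ∈ K := by
    refine Subalgebra.add_mem _ ?_ ?_
    · exact Subalgebra.prod_mem _ fun i hi => Subalgebra.pow_mem _
        (hmem i (by have := (Finset.mem_filter.mp hi).2; omega)) _
    · exact Subalgebra.prod_mem _ fun i hi => Subalgebra.pow_mem _
        (hmem i (by have := (Finset.mem_filter.mp hi).2; omega)) _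
  have hPQne : P + Q ≠ 0 := by
    set p : MvPolynomial (Fin m) ℂ :=
      (∏ i ∈ Finset.univ.filter (fun i => 0 < B i k), MvPolynomial.X i ^ (B i k).toNat) +
      (∏ i ∈ Finset.univ.filter (fun i => B i k < 0), MvPolynomial.X i ^ (-B i k).toNat) with hp
    have heval : MvPolynomial.aeval x p = P + Q := by
      simp [hp, hP, hQ]
    have hpne : p ≠ 0 := by
      intro h0
      have := congrArg (MvPolynomial.aeval (fun _ : Fin m => (1 : ℂ))) h0
      simp [hp] at this
    intro h0
    exact hpne (hx (by rw [heval, h0, map_zero]))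
  -- c is transcendental over K
  have hcK : Transcendental K c := by
    have := transcendental_algebraMap_div (K := K)
      (Subtype.val_injective) htrans (s := ⟨P + Q, hPQmem⟩)
      (by intro h; exact hPQne (congrArg Subtype.val h))
    simpa [hcdef] using this
  -- conclude
  have hopt : AlgebraicIndependent ℂ (fun o : Option {i : Fin m // i ≠ k'} => o.elim c z) :=
    (hzind.option_iff_transcendental c).mpr hcK
  have key := hopt.comp ((Equiv.optionSubtypeNe k').symm) (Equiv.injective _)
  have : (fun o : Option {i : Fin m // i ≠ k'} => o.elim c z) ∘ (Equiv.optionSubtypeNe k').symm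
      = Function.update x k' c := by
    funext i
    by_cases hik : i = k'
    · subst hik
      simp [Equiv.optionSubtypeNe_symm_self]
    · simp [Equiv.optionSubtypeNe_symm_of_ne hik, Function.update_of_ne hik, hz]
  rwa [this] at key
end

section
/- Let x be a 6×6 complex upper unitriangular matrix (x_{ii} = 1 for all i and x_{ij} = 0 whenever i > j). Then Δ_{{1,3},{5,6}}(x) = Δ_{{1},{2}}(x) · Δ_{{2,3},{5,6}}(x) − Δ_{{1,2,3},{2,5,6}}(x), i.e., det of the submatrix of x with rows {1,3} and columns {5,6} equals x_{12} times the det of the submatrix with rows {2,3}, columns {5,6}, minus the det of the submatrix with rows {1,2,3}, columns {2,5,6}. -/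
/-- For a `6 × 6` upper unitriangular complex matrix `x`, the minor identity
`Δ_{{1,3},{5,6}}(x) = Δ_{{1},{2}}(x) · Δ_{{2,3},{5,6}}(x) − Δ_{{1,2,3},{2,5,6}}(x)`
holds (indices written `0`-based below). -/
theorem minor_identity_D13_56 (x : Matrix (Fin 6) (Fin 6) ℂ)
    (hdiag : ∀ i, x i i = 1) (hlow : ∀ i j, j < i → x i j = 0) :
    (x.submatrix ![0, 2] ![4, 5]).det =
      (x.submatrix ![0] ![1]).det * (x.submatrix ![1, 2] ![4, 5]).det -
        (x.submatrix ![0, 1, 2] ![1, 4, 5]).det := by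
  simp only [Matrix.det_fin_two, Matrix.det_fin_three, Matrix.det_fin_one]
  simp [Matrix.det_fin_two, Matrix.det_fin_three, Matrix.det_fin_one,
    hdiag 1, hlow 1 0 (by decide), hlow 2 0 (by decide), hlow 2 1 (by decide)]
  ring
end
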